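/- arXiv:2501.09880 — 2 statements merged into one kernel-verified Lean document; each statement's English description precedes it below -/
import Mathlib

section
/- Let u : 𝕌 → (0, +∞) be a positive harmonic function on the open unit disc, and suppose that |∇u(z₀)| = 2u(z₀)/(1−|z₀|²) for some z₀ ∈ 𝕌. Then u is the real part of a conformal isomorphism from 𝕌 onto the right half-plane 𝕂 = {z ∈ ℂ : Re z > 0}; that is, there exists a holomorphic bijection f from 𝕌 onto 𝕂 with Re f(z) = u(z) for all z ∈ 𝕌. -/
/-!
Being harmonic on the disc, `u` is the real part of a holomorphic `F`, and `|∇u(z₀)| = |F'(z₀)|`.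
Let `φ` be the disc automorphism sending `0` to `z₀` and `ψ` the Möbius map of the right
half-plane onto the disc sending `F z₀` to `0`. Then `G = ψ ∘ F ∘ φ` maps the disc into itself,
fixes `0`, and the gradient equality says exactly that `|G'(0)| = 1`. By the equality case of
Schwarz's lemma `G` is a rotation, so `F = ψ⁻¹ ∘ G ∘ φ⁻¹` is a composition of bijections.
-/

open Complex Metric Set InnerProductSpace
open scoped ComplexConjugate

theorem harmonicOnNhd_of_fderiv_laplace {u : ℂ → ℝ} {s : Set ℂ} (hs : IsOpen s)
    (hreg : ContDiffOn ℝ 2 u s)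
    (hlap : ∀ z ∈ s, fderiv ℝ (fun w => fderiv ℝ u w 1) z 1 +
      fderiv ℝ (fun w => fderiv ℝ u w I) z I = 0) :
    HarmonicOnNhd u s := by
  intro z hz
  refine ⟨hreg.contDiffAt (hs.mem_nhds hz), ?_⟩
  filter_upwards [hs.mem_nhds hz] with w hw
  have hdiff : DifferentiableAt ℝ (fderiv ℝ u) w :=
    ((hreg.fderiv_of_isOpen hs (by norm_num)).differentiableOn one_ne_zero w hw).differentiableAt
      (hs.mem_nhds hw)
  have h := hlap w hw
  rw [fderiv_clm_apply hdiff (differentiableAt_const _),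
    fderiv_clm_apply hdiff (differentiableAt_const _)] at h
  simpa [laplacian_eq_iteratedFDeriv_complexPlane, iteratedFDeriv_two_apply] using h

theorem HasDerivAt.hasGradientAt_re {F : ℂ → ℂ} {c z : ℂ} (hF : HasDerivAt F c z) :
    HasGradientAt (fun w => (F w).re) (conj c) z := by
  rw [hasGradientAt_iff_hasFDerivAt]
  refine (reCLM.hasFDerivAt.comp z (hF.hasFDerivAt.restrictScalars ℝ)).congr_fderiv ?_
  ext w
  simp [Complex.inner, mul_comm]

noncomputable section

def discMobius (a z : ℂ) : ℂ := (z + a) / (1 + conj a * z)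

lemma normSq_one_add_conj_mul_sub_normSq_add (a z : ℂ) :
    normSq (1 + conj a * z) - normSq (z + a) = (1 - normSq a) * (1 - normSq z) := by
  simp only [normSq_apply, add_re, add_im, mul_re, mul_im, conj_re, conj_im, one_re, one_im]
  ring

lemma normSq_lt_one_of_mem_ball {z : ℂ} (hz : z ∈ ball (0 : ℂ) 1) : normSq z < 1 := by
  rw [mem_ball_zero_iff] at hz
  rw [normSq_eq_norm_sq]
  nlinarith [norm_nonneg z]

lemma one_add_conj_mul_ne_zero {a z : ℂ} (ha : a ∈ ball (0 : ℂ) 1) (hz : z ∈ ball (0 : ℂ) 1) :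
    1 + conj a * z ≠ 0 := by
  intro h
  have := normSq_one_add_conj_mul_sub_normSq_add a z
  rw [h, map_zero] at this
  nlinarith [normSq_nonneg (z + a), normSq_lt_one_of_mem_ball ha, normSq_lt_one_of_mem_ball hz]

lemma discMobius_mem_ball {a z : ℂ} (ha : a ∈ ball (0 : ℂ) 1) (hz : z ∈ ball (0 : ℂ) 1) :
    discMobius a z ∈ ball (0 : ℂ) 1 := by
  have hden := one_add_conj_mul_ne_zero ha hz
  rw [mem_ball_zero_iff, discMobius, norm_div, div_lt_one (norm_pos_iff.mpr hden),
    ← sq_lt_sq₀ (norm_nonneg _) (norm_nonneg _), ← normSq_eq_norm_sq, ← normSq_eq_norm_sq,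
    ← sub_pos, normSq_one_add_conj_mul_sub_normSq_add]
  exact mul_pos (sub_pos.mpr (normSq_lt_one_of_mem_ball ha))
    (sub_pos.mpr (normSq_lt_one_of_mem_ball hz))

lemma discMobius_discMobius_neg {a z : ℂ} (ha : a ∈ ball (0 : ℂ) 1) (hz : z ∈ ball (0 : ℂ) 1) :
    discMobius a (discMobius (-a) z) = z := by
  have hD : 1 - conj a * z ≠ 0 := by
    simpa [sub_eq_add_neg] using
      one_add_conj_mul_ne_zero (by simpa using ha : -a ∈ ball (0 : ℂ) 1) hz
  have hnorm : 1 - a * conj a ≠ 0 := by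
    rw [mul_conj, ← ofReal_one, ← ofReal_sub, ofReal_ne_zero]
    exact (sub_pos.mpr (normSq_lt_one_of_mem_ball ha)).ne'
  have hnum : (z - a) / (1 - conj a * z) + a = z * (1 - a * conj a) / (1 - conj a * z) := by
    rw [eq_div_iff hD, div_add' _ _ _ hD, div_mul_cancel₀ _ hD]; ring
  have hden : 1 + conj a * ((z - a) / (1 - conj a * z)) = (1 - a * conj a) / (1 - conj a * z) := by
    rw [mul_div_assoc', one_add_div hD]; ring
  simp only [discMobius, map_neg, neg_mul, ← sub_eq_add_neg]
  rw [hnum, hden, div_div_div_cancel_right₀ hD, mul_div_cancel_right₀ _ hnorm]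

lemma bijOn_discMobius {a : ℂ} (ha : a ∈ ball (0 : ℂ) 1) :
    BijOn (discMobius a) (ball 0 1) (ball 0 1) := by
  have hneg : -a ∈ ball (0 : ℂ) 1 := by simpa using ha
  refine InvOn.bijOn ⟨fun z hz => ?_, fun z hz => discMobius_discMobius_neg ha hz⟩
    (fun z hz => discMobius_mem_ball ha hz) (fun z hz => discMobius_mem_ball hneg hz)
  simpa using discMobius_discMobius_neg hneg hz

lemma discMobius_zero (a : ℂ) : discMobius a 0 = a := by simp [discMobius]

lemma hasDerivAt_discMobius_zero (a : ℂ) :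
    HasDerivAt (discMobius a) ((1 - ‖a‖ ^ 2 : ℝ) : ℂ) 0 := by
  have h := ((hasDerivAt_id' 0).add_const a).div
    (((hasDerivAt_id' 0).const_mul (conj a)).const_add 1) (by simp)
  exact h.congr_deriv (by simp [mul_conj, normSq_eq_norm_sq])

lemma differentiableOn_discMobius {a : ℂ} (ha : a ∈ ball (0 : ℂ) 1) :
    DifferentiableOn ℂ (discMobius a) (ball 0 1) := fun _ hz =>
  ((differentiableAt_id.add_const a).div ((differentiableAt_id.const_mul _).const_add 1)
    (one_add_conj_mul_ne_zero ha hz)).differentiableWithinAt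

def halfPlaneToDisc (w₀ w : ℂ) : ℂ := (w - w₀) / (w + conj w₀)

def discToHalfPlane (w₀ ζ : ℂ) : ℂ := (w₀ + conj w₀ * ζ) / (1 - ζ)

lemma normSq_add_conj_sub_normSq_sub (w₀ w : ℂ) :
    normSq (w + conj w₀) - normSq (w - w₀) = 4 * w.re * w₀.re := by
  simp only [normSq_apply, add_re, add_im, sub_re, sub_im, conj_re, conj_im]
  ring

lemma add_conj_ne_zero_of_re_pos {w₀ w : ℂ} (hw₀ : 0 < w₀.re) (hw : 0 < w.re) :
    w + conj w₀ ≠ 0 := by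
  intro h
  have := congrArg re h
  simp only [add_re, conj_re, zero_re] at this
  linarith

lemma halfPlaneToDisc_mem_ball {w₀ w : ℂ} (hw₀ : 0 < w₀.re) (hw : 0 < w.re) :
    halfPlaneToDisc w₀ w ∈ ball (0 : ℂ) 1 := by
  rw [mem_ball_zero_iff, halfPlaneToDisc, norm_div,
    div_lt_one (norm_pos_iff.mpr (add_conj_ne_zero_of_re_pos hw₀ hw)),
    ← sq_lt_sq₀ (norm_nonneg _) (norm_nonneg _), ← normSq_eq_norm_sq, ← normSq_eq_norm_sq,
    ← sub_pos, normSq_add_conj_sub_normSq_sub]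
  positivity

lemma re_discToHalfPlane (w₀ ζ : ℂ) :
    (discToHalfPlane w₀ ζ).re = w₀.re * (1 - normSq ζ) / normSq (1 - ζ) := by
  rw [discToHalfPlane, div_re, ← add_div]
  congr 1
  simp only [normSq_apply, add_re, add_im, sub_re, sub_im, mul_re, mul_im, conj_re, conj_im,
    one_re, one_im]
  ring

lemma one_sub_ne_zero_of_mem_ball {ζ : ℂ} (hζ : ζ ∈ ball (0 : ℂ) 1) : 1 - ζ ≠ 0 := by
  rw [sub_ne_zero]
  rintro rfl
  simp at hζ

lemma discToHalfPlane_re_pos {w₀ ζ : ℂ} (hw₀ : 0 < w₀.re) (hζ : ζ ∈ ball (0 : ℂ) 1) :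
    0 < (discToHalfPlane w₀ ζ).re := by
  rw [re_discToHalfPlane]
  exact div_pos (mul_pos hw₀ (sub_pos.mpr (normSq_lt_one_of_mem_ball hζ)))
    (normSq_pos.mpr (one_sub_ne_zero_of_mem_ball hζ))

lemma discToHalfPlane_halfPlaneToDisc {w₀ w : ℂ} (hw₀ : 0 < w₀.re) (hw : 0 < w.re) :
    discToHalfPlane w₀ (halfPlaneToDisc w₀ w) = w := by
  have h₁ := add_conj_ne_zero_of_re_pos hw₀ hw
  have h₀ := add_conj_ne_zero_of_re_pos hw₀ hw₀
  simp only [discToHalfPlane, halfPlaneToDisc]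
  field_simp
  linear_combination w * mul_inv_cancel₀ h₀

lemma halfPlaneToDisc_discToHalfPlane {w₀ ζ : ℂ} (hw₀ : 0 < w₀.re) (hζ : ζ ∈ ball (0 : ℂ) 1) :
    halfPlaneToDisc w₀ (discToHalfPlane w₀ ζ) = ζ := by
  have h₁ := one_sub_ne_zero_of_mem_ball hζ
  have h₀ := add_conj_ne_zero_of_re_pos hw₀ hw₀
  simp only [discToHalfPlane, halfPlaneToDisc]
  field_simp
  linear_combination ζ * mul_inv_cancel₀ h₀

lemma bijOn_discToHalfPlane {w₀ : ℂ} (hw₀ : 0 < w₀.re) :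
    BijOn (discToHalfPlane w₀) (ball 0 1) {w | 0 < w.re} :=
  InvOn.bijOn
    ⟨fun _ hζ => halfPlaneToDisc_discToHalfPlane hw₀ hζ,
      fun _ hw => discToHalfPlane_halfPlaneToDisc hw₀ hw⟩
    (fun _ hζ => discToHalfPlane_re_pos hw₀ hζ) (fun _ hw => halfPlaneToDisc_mem_ball hw₀ hw)

lemma halfPlaneToDisc_self (w₀ : ℂ) : halfPlaneToDisc w₀ w₀ = 0 := by
  simp [halfPlaneToDisc]

lemma hasDerivAt_halfPlaneToDisc_self {w₀ : ℂ} (hw₀ : 0 < w₀.re) :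
    HasDerivAt (halfPlaneToDisc w₀) ((2 * w₀.re)⁻¹ : ℝ) w₀ := by
  have h₀ : w₀ + conj w₀ ≠ 0 := add_conj_ne_zero_of_re_pos hw₀ hw₀
  have h := ((hasDerivAt_id' w₀).sub_const w₀).div ((hasDerivAt_id' w₀).add_const (conj w₀)) h₀
  refine h.congr_deriv ?_
  have hre : (w₀.re : ℂ) ≠ 0 := ofReal_ne_zero.mpr hw₀.ne'
  rw [add_conj]
  push_cast
  field_simp
  ring

lemma differentiableOn_halfPlaneToDisc {w₀ : ℂ} (hw₀ : 0 < w₀.re) :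
    DifferentiableOn ℂ (halfPlaneToDisc w₀) {w | 0 < w.re} := fun _ hw =>
  ((differentiableAt_id.sub_const w₀).div (differentiableAt_id.add_const _)
    (add_conj_ne_zero_of_re_pos hw₀ hw)).differentiableWithinAt

lemma bijOn_mul_ball {c : ℂ} (hc : ‖c‖ = 1) : BijOn (c * ·) (ball (0 : ℂ) 1) (ball 0 1) := by
  have hc₀ : c ≠ 0 := norm_ne_zero_iff.mp (by rw [hc]; exact one_ne_zero)
  have hmaps : ∀ d : ℂ, ‖d‖ = 1 → MapsTo (d * ·) (ball (0 : ℂ) 1) (ball 0 1) :=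
    fun d hd z hz => by simpa [norm_mul, hd] using hz
  exact InvOn.bijOn ⟨fun z _ => inv_mul_cancel_left₀ hc₀ z, fun z _ => mul_inv_cancel_left₀ hc₀ z⟩
    (hmaps c hc) (hmaps c⁻¹ (by rw [norm_inv, hc, inv_one]))

lemma eqOn_deriv_mul_of_norm_deriv_eq_one {G : ℂ → ℂ} (hG : DifferentiableOn ℂ G (ball 0 1))
    (hmaps : MapsTo G (ball 0 1) (ball 0 1)) (h₀ : G 0 = 0) (hderiv : ‖deriv G 0‖ = 1) :
    EqOn G (deriv G 0 * ·) (ball 0 1) := by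
  have h := Complex.affine_of_mapsTo_ball_of_norm_dslope_eq_div (R₂ := 1) hG
    (by rw [h₀]; exact hmaps.mono_right ball_subset_closedBall) (mem_ball_self one_pos)
    (by rwa [dslope_same, div_one])
  intro z hz
  simpa [h₀, dslope_same, mul_comm] using h hz

theorem bijOn_ball_rightHalfPlane_of_norm_deriv_eq {F : ℂ → ℂ}
    (hF : DifferentiableOn ℂ F (ball 0 1)) (hpos : MapsTo F (ball 0 1) {w | 0 < w.re})
    {z₀ : ℂ} (hz₀ : z₀ ∈ ball (0 : ℂ) 1)
    (heq : ‖deriv F z₀‖ = 2 * (F z₀).re / (1 - ‖z₀‖ ^ 2)) :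
    BijOn F (ball 0 1) {w | 0 < w.re} := by
  set w₀ := F z₀
  have hw₀ : 0 < w₀.re := hpos hz₀
  set G := halfPlaneToDisc w₀ ∘ F ∘ discMobius z₀
  have hmaps : MapsTo (F ∘ discMobius z₀) (ball 0 1) {w | 0 < w.re} :=
    hpos.comp fun _ hz => discMobius_mem_ball hz₀ hz
  have hGd : DifferentiableOn ℂ G (ball 0 1) :=
    (differentiableOn_halfPlaneToDisc hw₀).comp
      (hF.comp (differentiableOn_discMobius hz₀) fun _ hz => discMobius_mem_ball hz₀ hz) hmaps
  have hG₀ : G 0 = 0 := by simp [G, discMobius_zero, w₀, halfPlaneToDisc_self]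
  have hGderiv : HasDerivAt G
      (((2 * w₀.re)⁻¹ : ℝ) * (deriv F z₀ * ((1 - ‖z₀‖ ^ 2 : ℝ) : ℂ))) 0 :=
    (hasDerivAt_halfPlaneToDisc_self hw₀).comp_of_eq 0
      ((hF.differentiableAt (isOpen_ball.mem_nhds hz₀)).hasDerivAt.comp_of_eq 0
        (hasDerivAt_discMobius_zero z₀) (discMobius_zero z₀).symm)
      (by simp [discMobius_zero, w₀])
  have hnorm : ‖deriv G 0‖ = 1 := by
    have h₁ : 0 < 1 - ‖z₀‖ ^ 2 := by
      rw [mem_ball_zero_iff] at hz₀; nlinarith [norm_nonneg z₀]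
    rw [hGderiv.deriv, norm_mul, norm_mul, heq, norm_real, norm_real,
      Real.norm_of_nonneg (by positivity), Real.norm_of_nonneg h₁.le]
    field_simp
  have hGeq := eqOn_deriv_mul_of_norm_deriv_eq_one hGd
    (fun _ hz => halfPlaneToDisc_mem_ball hw₀ (hmaps hz)) hG₀ hnorm
  have hneg : -z₀ ∈ ball (0 : ℂ) 1 := by simpa using hz₀
  -- `F = ψ⁻¹ ∘ (deriv G 0 * ·) ∘ φ⁻¹` on the disc, with `φ⁻¹ = discMobius (-z₀)`
  refine ((bijOn_discToHalfPlane hw₀).comp ((bijOn_mul_ball hnorm).comp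
    (bijOn_discMobius hneg))).congr fun z hz => ?_
  have hGz := hGeq (discMobius_mem_ball hneg hz)
  simp only [G, Function.comp_apply, discMobius_discMobius_neg hz₀ hz] at hGz ⊢
  rw [← hGz, discToHalfPlane_halfPlaneToDisc hw₀ (hpos hz)]

end

/-- If equality holds in the gradient estimate at some point, then the function is the
real part of a conformal isomorphism from the unit disc onto the right
half-plane. -/
theorem conformal_of_gradient_eq (u : ℂ → ℝ)
(hreg : ContDiffOn ℝ 2 u (Metric.ball (0:ℂ) 1))
    (hlap : ∀ z ∈ Metric.ball (0:ℂ) 1,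
      fderiv ℝ (fun w => fderiv ℝ u w 1) z 1 +
      fderiv ℝ (fun w => fderiv ℝ u w Complex.I) z Complex.I = 0)
    (hpos : ∀ z ∈ Metric.ball (0:ℂ) 1, 0 < u z)
    (z₀ : ℂ) (hz₀ : z₀ ∈ Metric.ball (0:ℂ) 1)
    (heq : ‖gradient u z₀‖ = 2 * u z₀ / (1 - ‖z₀‖ ^ 2)) :
    ∃ f : ℂ → ℂ, DifferentiableOn ℂ f (Metric.ball (0:ℂ) 1) ∧
      Set.BijOn f (Metric.ball (0:ℂ) 1) {w : ℂ | 0 < w.re} ∧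
      ∀ z ∈ Metric.ball (0:ℂ) 1, (f z).re = u z := by
  obtain ⟨F, hFan, hFre⟩ :=
    (harmonicOnNhd_of_fderiv_laplace isOpen_ball hreg hlap).exists_analyticOnNhd_ball_re_eq
  have hF : DifferentiableOn ℂ F (ball 0 1) := hFan.differentiableOn
  have hre : ∀ z ∈ ball (0 : ℂ) 1, (F z).re = u z := fun z hz => hFre hz
  have hF' : HasDerivAt F (deriv F z₀) z₀ :=
    (hF.differentiableAt (isOpen_ball.mem_nhds hz₀)).hasDerivAt
  have hgrad : gradient u z₀ = conj (deriv F z₀) :=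
    (hF'.hasGradientAt_re.congr_of_eventuallyEq
      (Filter.eventuallyEq_of_mem (isOpen_ball.mem_nhds hz₀) fun z hz => (hre z hz).symm)).gradient
  have hFpos : MapsTo F (ball 0 1) {w | 0 < w.re} := fun z hz => by
    simpa [hre z hz] using hpos z hz
  refine ⟨F, hF, bijOn_ball_rightHalfPlane_of_norm_deriv_eq hF hFpos hz₀ ?_, hre⟩
  rw [hre z₀ hz₀, ← heq, hgrad, RCLike.norm_conj]
end

section
/- (Beardon–Carne inequality, half-plane instance) Let f : 𝕌 → ℂ be holomorphic with Re f(z) > 0 for all z ∈ 𝕌, and set c = |f′(0)| / (2 · Re f(0)). Then for every z ∈ 𝕌, arcosh( 1 + |f(z) − f(0)|² / (2 · Re f(z) · Re f(0)) ) ≤ log( (1 + |z|² + 2c|z|) / (1 − |z|²) ). -/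
/-!
The Cayley map `w ↦ (w - a) / (w + conj a)` with `a = f 0` carries the right half-plane into the
unit disc and `a` to `0`, so `g = (f - a) / (f + conj a)` is a self-map of the disc fixing `0`
with `‖g' 0‖ = c`. Writing `s = ‖g z‖`, the left-hand side equals `log ((1 + s) / (1 - s))`
(the Cayley map is a hyperbolic isometry). Applying Schwarz–Pick to `g z / z` gives the sharp
Schwarz bound `s ≤ r (r + c) / (1 + c r)` with `r = ‖z‖`, and at this value of `s` the quantity
`(1 + s) / (1 - s)` is exactly `(1 + r² + 2 c r) / (1 - r²)`.
-/

noncomputable def arcosh (x : ℝ) : ℝ := Real.log (x + Real.sqrt (x ^ 2 - 1))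

open Metric Complex Set ComplexConjugate

namespace Complex

theorem normSq_one_sub_conj_mul_sub_normSq_sub (b u : ℂ) :
    normSq (1 - conj b * u) - normSq (u - b) = (1 - normSq b) * (1 - normSq u) := by
  simp only [normSq_apply, sub_re, sub_im, mul_re, mul_im, conj_re, conj_im, one_re, one_im]
  ring

section Moebius

variable {b u : ℂ}

theorem norm_sub_le_norm_one_sub_conj_mul (hb : ‖b‖ ≤ 1) (hu : ‖u‖ ≤ 1) :
    ‖u - b‖ ≤ ‖1 - conj b * u‖ := by
  have key := normSq_one_sub_conj_mul_sub_normSq_sub b u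
  simp only [normSq_eq_norm_sq] at key
  have := mul_nonneg (sub_nonneg.2 (pow_le_one₀ (n := 2) (norm_nonneg b) hb))
    (sub_nonneg.2 (pow_le_one₀ (n := 2) (norm_nonneg u) hu))
  exact pow_le_pow_iff_left₀ (norm_nonneg _) (norm_nonneg _) two_ne_zero |>.1 (by linarith)

/-- The pseudo-hyperbolic distance does not increase under `u ↦ ‖u‖`, in multiplied-out form. -/
theorem abs_norm_sub_norm_mul_le (hb : ‖b‖ ≤ 1) (hu : ‖u‖ ≤ 1) :
    |‖u‖ - ‖b‖| * ‖1 - conj b * u‖ ≤ ‖u - b‖ * (1 - ‖b‖ * ‖u‖) := by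
  have key := normSq_one_sub_conj_mul_sub_normSq_sub b u
  simp only [normSq_eq_norm_sq] at key
  have hD : 1 - ‖b‖ * ‖u‖ ≤ ‖1 - conj b * u‖ := by
    simpa [norm_mul] using norm_sub_norm_le (1 : ℂ) (conj b * u)
  have hP : 0 ≤ 1 - ‖b‖ * ‖u‖ := by nlinarith [norm_nonneg b, norm_nonneg u]
  have hPQ : 0 ≤ (1 - ‖b‖ * ‖u‖) ^ 2 - |‖u‖ - ‖b‖| ^ 2 := by
    rw [sq_abs]
    nlinarith [mul_nonneg (sub_nonneg.2 (pow_le_one₀ (n := 2) (norm_nonneg b) hb))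
      (sub_nonneg.2 (pow_le_one₀ (n := 2) (norm_nonneg u) hu))]
  refine pow_le_pow_iff_left₀ (by positivity) (by positivity) two_ne_zero |>.1 ?_
  -- with `D = ‖1 - conj b * u‖`, `N = ‖u - b‖`, `P = 1 - ‖b‖ ‖u‖`, `Q = |‖u‖ - ‖b‖|` we have
  -- `D² - N² = P² - Q²`, so `N² P² - Q² D² = (D² - P²) (P² - Q²)` with both factors nonnegative
  nlinarith [mul_nonneg (sub_nonneg.2 (pow_le_pow_left₀ hP hD 2)) hPQ, sq_abs (‖u‖ - ‖b‖)]

end Moebius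

section SchwarzPick

variable {h : ℂ → ℂ} {z : ℂ}

/-- Schwarz–Pick, read off on moduli. -/
theorem norm_mul_one_add_le_of_mapsTo_closedBall (hd : DifferentiableOn ℂ h (ball 0 1))
    (h_maps : MapsTo h (ball 0 1) (closedBall 0 1)) (hz : z ∈ ball 0 1) :
    ‖h z‖ * (1 + ‖h 0‖ * ‖z‖) ≤ ‖z‖ + ‖h 0‖ := by
  have hle : ∀ w ∈ ball (0 : ℂ) 1, ‖h w‖ ≤ 1 := fun w hw => mem_closedBall_zero_iff.1 (h_maps hw)
  have hr := mem_ball_zero_iff.1 hz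
  set b := h 0
  rcases (hle 0 (mem_ball_self one_pos)).lt_or_eq with hb | hb
  swap
  · rw [hb]; nlinarith [hle z hz, norm_nonneg z]
  have hden : ∀ w ∈ ball (0 : ℂ) 1, 0 < ‖1 - conj b * h w‖ := by
    intro w hw
    refine lt_of_lt_of_le ?_ (norm_sub_norm_le 1 (conj b * h w))
    rw [norm_one, norm_mul, norm_conj]
    linarith [mul_le_of_le_one_right (norm_nonneg b) (hle w hw)]
  have hk : ‖h z - b‖ ≤ ‖z‖ * ‖1 - conj b * h z‖ := by
    have := norm_le_norm_of_mapsTo_ball (f := fun w => (h w - b) / (1 - conj b * h w))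
      ((hd.sub_const b).div ((differentiableOn_const 1).sub (hd.const_mul _))
        fun w hw => norm_pos_iff.1 (hden w hw))
      (fun w hw => mem_closedBall_zero_iff.2 <| by
        rw [norm_div, div_le_one (hden w hw)]
        exact norm_sub_le_norm_one_sub_conj_mul hb.le (hle w hw))
      (by simp [b]) hr
    rwa [norm_div, div_le_iff₀ (hden z hz)] at this
  have hP : 0 ≤ 1 - ‖b‖ * ‖h z‖ := by
    linarith [mul_le_of_le_one_right (norm_nonneg b) (hle z hz)]
  have : ‖h z‖ - ‖b‖ ≤ ‖z‖ * (1 - ‖b‖ * ‖h z‖) := by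
    refine le_of_mul_le_mul_right ?_ (hden z hz)
    linarith [abs_norm_sub_norm_mul_le (b := b) hb.le (hle z hz),
      mul_le_mul_of_nonneg_right (le_abs_self (‖h z‖ - ‖b‖)) (hden z hz).le,
      mul_le_mul_of_nonneg_right hk hP]
  linarith

/-- The sharp form of Schwarz's lemma. -/
theorem norm_mul_one_add_norm_deriv_mul_le_of_mapsTo_closedBall {g : ℂ → ℂ}
    (hd : DifferentiableOn ℂ g (ball 0 1)) (h_maps : MapsTo g (ball 0 1) (closedBall 0 1))
    (h₀ : g 0 = 0) (hz : z ∈ ball 0 1) :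
    ‖g z‖ * (1 + ‖deriv g 0‖ * ‖z‖) ≤ ‖z‖ * (‖z‖ + ‖deriv g 0‖) := by
  have hslope_maps : MapsTo (dslope g 0) (ball 0 1) (closedBall 0 1) := fun w hw => by
    simpa using norm_dslope_le_div_of_mapsTo_ball hd (by rwa [h₀]) hw
  have hslope := norm_mul_one_add_le_of_mapsTo_closedBall
    ((differentiableOn_dslope (ball_mem_nhds _ one_pos)).2 hd) hslope_maps hz
  have hgz : g z = z * dslope g 0 z := by
    simpa [h₀] using (sub_smul_dslope g 0 z).symm
  rw [dslope_same] at hslope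
  rw [hgz, norm_mul, mul_assoc]
  exact mul_le_mul_of_nonneg_left hslope (norm_nonneg z)

end SchwarzPick

end Complex

/-- The Cayley map of the right half-plane onto the unit disc sending `a` to `0`
(for `0 < a.re`). -/
noncomputable def cayley (a w : ℂ) : ℂ := (w - a) / (w + conj a)

section Cayley

variable {a w : ℂ}

theorem cayley_self (a : ℂ) : cayley a a = 0 := by simp [cayley]

theorem normSq_add_conj_eq (w a : ℂ) :
    normSq (w + conj a) = normSq (w - a) + 4 * w.re * a.re := by
  simp only [normSq_apply, add_re, add_im, sub_re, sub_im, conj_re, conj_im]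
  ring

theorem add_conj_ne_zero (hw : 0 < w.re) (ha : 0 < a.re) : w + conj a ≠ 0 := fun h => by
  have := congrArg re h
  simp only [add_re, conj_re, zero_re] at this
  linarith

theorem norm_cayley_lt_one (hw : 0 < w.re) (ha : 0 < a.re) : ‖cayley a w‖ < 1 := by
  rw [cayley, norm_div, div_lt_one (norm_pos_iff.2 (add_conj_ne_zero hw ha)), norm_def, norm_def,
    normSq_add_conj_eq]
  exact Real.sqrt_lt_sqrt (normSq_nonneg _) (by nlinarith)

theorem differentiableAt_cayley (hw : 0 < w.re) (ha : 0 < a.re) :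
    DifferentiableAt ℂ (cayley a) w :=
  ((differentiableAt_id.sub_const a).div (differentiableAt_id.add_const _)
    (add_conj_ne_zero hw ha))

theorem hasDerivAt_cayley_self (ha : 0 < a.re) : HasDerivAt (cayley a) (2 * a.re : ℂ)⁻¹ a := by
  have := ((hasDerivAt_id a).sub_const a).div ((hasDerivAt_id a).add_const (conj a))
    (add_conj_ne_zero ha ha)
  refine this.congr_deriv ?_
  have : (a.re : ℂ) ≠ 0 := ofReal_ne_zero.2 ha.ne'
  simp only [id, sub_self, zero_mul, sub_zero, one_mul, add_conj, sq]
  push_cast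
  field_simp

/-- The Cayley map is a hyperbolic isometry: it turns `cosh d_𝕂(w, a)` into `cosh d_𝕌(s, 0)`. -/
theorem one_add_norm_sub_sq_div_eq (hw : 0 < w.re) (ha : 0 < a.re) :
    1 + ‖w - a‖ ^ 2 / (2 * w.re * a.re) =
      (1 + ‖cayley a w‖ ^ 2) / (1 - ‖cayley a w‖ ^ 2) := by
  rw [cayley, norm_div, div_pow, ← normSq_eq_norm_sq, ← normSq_eq_norm_sq, normSq_add_conj_eq]
  have hxy : 0 < w.re * a.re := mul_pos hw ha
  have hN := normSq_nonneg (w - a)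
  have hsub : 1 - normSq (w - a) / (normSq (w - a) + 4 * w.re * a.re) =
      4 * w.re * a.re / (normSq (w - a) + 4 * w.re * a.re) := by
    field_simp
    ring
  rw [hsub]
  field_simp
  ring

end Cayley

theorem arcosh_one_add_sq_div_one_sub_sq {s : ℝ} (hs₀ : 0 ≤ s) (hs₁ : s < 1) :
    arcosh ((1 + s ^ 2) / (1 - s ^ 2)) = Real.log ((1 + s) / (1 - s)) := by
  have h : 0 < 1 - s ^ 2 := by nlinarith
  have h' : 0 < 1 - s := by linarith
  have hsq : ((1 + s ^ 2) / (1 - s ^ 2)) ^ 2 - 1 = (2 * s / (1 - s ^ 2)) ^ 2 := by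
    field_simp
    ring
  rw [arcosh, hsq, Real.sqrt_sq (by positivity)]
  congr 1
  field_simp
  ring

theorem one_add_div_one_sub_le {s r c : ℝ} (hs : s < 1) (hr₀ : 0 ≤ r) (hr₁ : r < 1)
    (h : s * (1 + c * r) ≤ r * (r + c)) :
    (1 + s) / (1 - s) ≤ (1 + r ^ 2 + 2 * c * r) / (1 - r ^ 2) := by
  rw [div_le_div_iff₀ (by linarith) (by nlinarith)]
  linarith

/-- Beardon–Carne inequality for holomorphic maps of the unit disc into the
right half-plane. -/
theorem beardon_carne_halfplane (f : ℂ → ℂ)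
    (hf : DifferentiableOn ℂ f (Metric.ball (0:ℂ) 1))
    (hre : ∀ z ∈ Metric.ball (0:ℂ) 1, 0 < (f z).re)
    (c : ℝ) (hc : c = ‖deriv f 0‖ / (2 * (f 0).re))
    (z : ℂ) (hz : z ∈ Metric.ball (0:ℂ) 1) :
    arcosh (1 + ‖f z - f 0‖ ^ 2 / (2 * (f z).re * (f 0).re)) ≤
      Real.log ((1 + ‖z‖ ^ 2 + 2 * c * ‖z‖) /
        (1 - ‖z‖ ^ 2)) := by
  have h₀ : (0 : ℂ) ∈ ball (0 : ℂ) 1 := mem_ball_self one_pos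
  have ha := hre 0 h₀
  set g := cayley (f 0) ∘ f
  have hg : DifferentiableOn ℂ g (ball 0 1) := fun w hw =>
    ((differentiableAt_cayley (hre w hw) ha).comp w
      (hf.differentiableAt (isOpen_ball.mem_nhds hw))).differentiableWithinAt
  have hg_maps : MapsTo g (ball 0 1) (closedBall 0 1) := fun w hw =>
    mem_closedBall_zero_iff.2 (norm_cayley_lt_one (hre w hw) ha).le
  have hg' : ‖deriv g 0‖ = c := by
    rw [((hasDerivAt_cayley_self ha).comp 0
      (hf.differentiableAt (isOpen_ball.mem_nhds h₀)).hasDerivAt).deriv, hc, norm_mul, norm_inv,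
      div_eq_inv_mul]
    norm_cast
    rw [Real.norm_of_nonneg (by positivity)]
  have hschwarz := norm_mul_one_add_norm_deriv_mul_le_of_mapsTo_closedBall hg hg_maps
    (cayley_self (f 0)) hz
  rw [hg'] at hschwarz
  have hs : ‖cayley (f 0) (f z)‖ < 1 := norm_cayley_lt_one (hre z hz) ha
  rw [one_add_norm_sub_sq_div_eq (hre z hz) ha, arcosh_one_add_sq_div_one_sub_sq (norm_nonneg _) hs]
  exact Real.log_le_log (div_pos (by positivity) (sub_pos.2 hs))
    (one_add_div_one_sub_le hs (norm_nonneg z) (mem_ball_zero_iff.1 hz) hschwarz)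
end
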